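/- arXiv:1703.01583 — 2 statements merged into one kernel-verified Lean document; each statement's English description precedes it below -/
import Mathlib

section
/- Let (E,ℒ) be a labeled graph satisfying the standing assumptions with ℰ the smallest normal accommodating set, and suppose (E,ℒ,ℰ) is strongly cofinal. Suppose there exist a vertex w ∈ E⁰, a strictly increasing sequence l₁ < l₂ < ⋯ of positive integers, and paths β_i ∈ ℒ*(E) such that (β_i, [w]_{l_i}) is a loop for every i ≥ 1. Then for every generalized vertex [v]_l there exist an index i ≥ 1 and a path δ ∈ ℒ*(E) with [w]_{l_i} ⊆ r([v]_l, δ); in particular, every vertex connects to a loop. -/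
/-- The `n`-fold concatenation (power) `w^n` of a finite word `w`. -/
def wpow {Λ : Type*} (w : List Λ) (n : ℕ) : List Λ := (List.replicate n w).flatten

/-- The finite word `x_{[1,n]}` formed by the first `n` letters of an infinite word `x`. -/
def wordPrefix {Λ : Type*} (x : ℕ → Λ) (n : ℕ) : List Λ := (List.range n).map x

/-- A labeled graph `(E, ℒ)`: a directed graph with vertex set `V` and edge type `Edge`
(with range and source maps), together with a surjective labeling map `lbl` onto the
alphabet `Λ`. -/
structure LabeledGraph (V : Type*) (Λ : Type*) where
  Edge : Type*
  src : Edge → V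
  rng : Edge → V
  lbl : Edge → Λ
  lbl_surjective : Function.Surjective lbl

namespace LabeledGraph

variable {V : Type*} {Λ : Type*}

/-- `G.PathLabel u w α` holds iff there is a finite path `λ` of length `≥ 1` in the graph
with source `u`, range `w` and label word `ℒ(λ) = α`. -/
inductive PathLabel (G : LabeledGraph V Λ) : V → V → List Λ → Prop
  | single (e : G.Edge) : PathLabel G (G.src e) (G.rng e) [G.lbl e]
  | cons (e : G.Edge) {w : V} {α : List Λ} :
      PathLabel G (G.rng e) w α → PathLabel G (G.src e) w (G.lbl e :: α)

variable (G : LabeledGraph V Λ)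

/-- `α ∈ ℒ*(E)`: `α` is the label of some path of length `≥ 1`. -/
def IsLabel (α : List Λ) : Prop := ∃ u w, G.PathLabel u w α

/-- The relative range `r(A, α)` of `α` with respect to `A`. -/
def rel (A : Set V) (α : List Λ) : Set V := {w | ∃ u ∈ A, G.PathLabel u w α}

/-- `r(α) = r(E⁰, α)`. -/
def range' (α : List Λ) : Set V := G.rel Set.univ α

/-- `s(α)`: the set of sources of paths labeled `α`. -/
def srcSet (α : List Λ) : Set V := {u | ∃ w, G.PathLabel u w α}

/-- `ℒ(AEⁿ)`: labels of paths of length `n` with source in `A`. -/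
def lblFrom (A : Set V) (n : ℕ) : Set (List Λ) :=
  {α | α.length = n ∧ ∃ u ∈ A, ∃ w, G.PathLabel u w α}

/-- `ℒ(AE^{≥1})`: labels of paths of length `≥ 1` with source in `A`. -/
def lblFromGe (A : Set V) : Set (List Λ) := {α | ∃ u ∈ A, ∃ w, G.PathLabel u w α}

/-- `ℒ(EⁿA)`: labels of paths of length `n` with range in `A`. -/
def lblTo (A : Set V) (n : ℕ) : Set (List Λ) :=
  {α | α.length = n ∧ ∃ u, ∃ w ∈ A, G.PathLabel u w α}

/-- The generalized vertex `[v]_l`: the set of vertices `w` receiving at least one edge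
such that `ℒ(E^k w) = ℒ(E^k v)` for all `1 ≤ k ≤ l`. -/
def gv (v : V) (l : ℕ) : Set V :=
  {w | (∃ e : G.Edge, G.rng e = w) ∧
    ∀ k : ℕ, 1 ≤ k → k ≤ l → G.lblTo {w} k = G.lblTo {v} k}

/-- Membership in `ℰ`, the smallest collection of subsets of `E⁰` containing all ranges
`r(α)` and closed under relative ranges, finite intersections, finite unions and
relative complements (the smallest normal accommodating set). -/
inductive memE : Set V → Prop
  | empty : memE ∅
  | range (α : List Λ) : α ≠ [] → memE (G.range' α)
  | relRange {A : Set V} (α : List Λ) : α ≠ [] → memE A → memE (G.rel A α)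
  | inter {A C : Set V} : memE A → memE C → memE (A ∩ C)
  | union {A C : Set V} : memE A → memE C → memE (A ∪ C)
  | diff {A C : Set V} : memE A → memE C → memE (A \ C)

/-- The standing assumptions on the labeled space `(E, ℒ, ℰ)`: the graph has no sinks and
the labeled space is weakly left-resolving, set-finite and receiver set-finite. -/
structure Standing : Prop where
  no_sinks : ∀ u : V, ∃ e : G.Edge, G.src e = u
  weakly_left_resolving : ∀ A C : Set V, G.memE A → G.memE C →
    ∀ α : List Λ, α ≠ [] → G.rel (A ∩ C) α = G.rel A α ∩ G.rel C α
  set_finite : ∀ A : Set V, G.memE A → ∀ k : ℕ, 1 ≤ k → (G.lblFrom A k).Finite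
  receiver_set_finite : ∀ A : Set V, G.memE A → ∀ k : ℕ, 1 ≤ k → (G.lblTo A k).Finite

/-- `α` is agreeable for `[v]_l` (the condition only depends on `l`):
`α = βα' = α'γ` with `α', β, γ ∈ ℒ*(E)` and `|β| = |γ| ≤ l`. -/
def Agreeable (l : ℕ) (α : List Λ) : Prop :=
  ∃ α' β γ : List Λ, G.IsLabel α' ∧ G.IsLabel β ∧ G.IsLabel γ ∧
    β.length = γ.length ∧ β.length ≤ l ∧ α = β ++ α' ∧ α = α' ++ γ

/-- `α` (a path with `s(α) ∩ [v]_l ≠ ∅`) is disagreeable for `[v]_l`. -/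
def DisagreeableFor (v : V) (l : ℕ) (α : List Λ) : Prop :=
  (G.srcSet α ∩ G.gv v l).Nonempty ∧ ¬ G.Agreeable l α

/-- The generalized vertex `[v]_l` is disagreeable: there is `N ≥ 1` such that for every
`n > N` there is a path in `ℒ(E^{≥n})` which is disagreeable for `[v]_l`. -/
def DisagreeableGV (v : V) (l : ℕ) : Prop :=
  ∃ N : ℕ, 1 ≤ N ∧ ∀ n : ℕ, N < n →
    ∃ α : List Λ, n ≤ α.length ∧ G.DisagreeableFor v l α

/-- The labeled space `(E, ℒ, ℰ)` is disagreeable. -/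
def Disagreeable : Prop :=
  ∀ v : V, ∃ L : ℕ, 1 ≤ L ∧ ∀ l : ℕ, L ≤ l → G.DisagreeableGV v l

/-- `(α, A)` is a loop: `A ∈ ℰ` is nonempty, `α ∈ ℒ*(E)` and `A ⊆ r(A, α)`. -/
def IsLoop (α : List Λ) (A : Set V) : Prop :=
  α ≠ [] ∧ G.memE A ∧ A.Nonempty ∧ A ⊆ G.rel A α

/-- The loop `(α, A)` has an exit: either (i) there is `β ∈ ℒ(AE^{|α|})` with `β ≠ α` and
`r(A, β) ≠ ∅`, or (ii) `A ⊊ r(A, α)`. -/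
def HasExit (α : List Λ) (A : Set V) : Prop :=
  (∃ β : List Λ, β ∈ G.lblFrom A α.length ∧ β ≠ α ∧ (G.rel A β).Nonempty) ∨
    A ⊂ G.rel A α

/-- `A ∈ ℰ` is minimal: `A ≠ ∅` and `A ∩ C ∈ {A, ∅}` for every `C ∈ ℰ`. -/
def MinimalSet (A : Set V) : Prop :=
  G.memE A ∧ A.Nonempty ∧ ∀ C : Set V, G.memE C → A ∩ C = A ∨ A ∩ C = ∅

/-- A set `Bset ⊆ E⁰` connects to a loop: there are a loop `(α, A)` and finitely many
paths `δ₁, …, δ_m ∈ ℒ*(E)`, none of which is an initial path of another, with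
`A ⊆ ∪ᵢ r(Bset, δᵢ)`. -/
def ConnectsToLoop (Bset : Set V) : Prop :=
  ∃ (α : List Λ) (A : Set V), G.IsLoop α A ∧
    ∃ (m : ℕ) (δ : Fin m → List Λ), (∀ i, G.IsLabel (δ i)) ∧
      (∀ i j, i ≠ j → ¬ (δ i <+: δ j)) ∧ A ⊆ ⋃ i, G.rel Bset (δ i)

/-- Every vertex connects to a loop: every generalized vertex `[v]_l` connects to a loop. -/
def EveryVertexConnectsToLoop : Prop :=
  ∀ (v : V) (l : ℕ), 1 ≤ l → (∃ e : G.Edge, G.rng e = v) →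
    G.ConnectsToLoop (G.gv v l)

/-- The labeled space `(E, ℒ, ℰ)` is strongly cofinal. -/
def StronglyCofinal : Prop :=
  ∀ x : ℕ → Λ, (∀ n : ℕ, 1 ≤ n → G.IsLabel (wordPrefix x n)) →
    ∀ (v : V) (l : ℕ), (∃ e : G.Edge, G.rng e = v) → 1 ≤ l →
      ∃ N : ℕ, 1 ≤ N ∧ ∃ (m : ℕ) (lam : Fin m → List Λ),
        (∀ i, G.IsLabel (lam i)) ∧
        G.range' (wordPrefix x N) ⊆ ⋃ i, G.rel (G.gv v l) (lam i)

/-- A subset `H ⊆ ℰ` is hereditary: it is closed under finite unions, relative ranges,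
and subsets belonging to `ℰ`. -/
def IsHereditary (H : Set (Set V)) : Prop :=
  (∀ A ∈ H, G.memE A) ∧
  (∀ A ∈ H, ∀ C ∈ H, A ∪ C ∈ H) ∧
  (∀ A ∈ H, ∀ β : List Λ, G.IsLabel β → G.rel A β ∈ H) ∧
  (∀ A ∈ H, ∀ C : Set V, G.memE C → C ⊆ A → C ∈ H)

/-- A subset `H ⊆ ℰ` is saturated: every `A ∈ ℰ` with `r(A, β) ∈ H` for all
`β ∈ ℒ*(E)` belongs to `H`. -/
def IsSaturated (H : Set (Set V)) : Prop :=
  ∀ A : Set V, G.memE A → (∀ β : List Λ, G.IsLabel β → G.rel A β ∈ H) → A ∈ H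

end LabeledGraph

/-!
Membership of a vertex in `r([v]_l, δ)` is decided by the labels of length at most `l + |δ|`
entering it. Indeed `[v]_l` is a finite Boolean combination of ranges `r(γ)` with `|γ| ≤ l`
(finiteness comes from receiver set-finiteness), and by weak left-resolvingness `r(·, δ)`
commutes with these Boolean operations and sends `r(γ)` to `r(γδ)`.

Strong cofinality, applied to the periodic word `β₁β₁β₁⋯` read along the loop
`(β₁, [w]_{l₁})`, covers `[w]_{l₁}` by finitely many sets `r([v]_l, λⱼτ)`. Pick `i` with
`lᵢ ≥ l + |λⱼτ|` for all `j`: some vertex of `[w]_{lᵢ} ⊆ [w]_{l₁}` lies in one of these sets,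
and all vertices of `[w]_{lᵢ}` share its labels up to length `lᵢ`, hence lie in it as well.
-/

section PeriodicWord

variable {Λ : Type*}

lemma wpow_succ' (α : List Λ) (k : ℕ) : wpow α (k + 1) = wpow α k ++ α := by
  simp [wpow, List.replicate_succ']

lemma length_wpow (α : List Λ) (k : ℕ) : (wpow α k).length = k * α.length := by
  simp [wpow, List.sum_replicate]

def periodicWord (α : List Λ) (hα : α ≠ []) (i : ℕ) : Λ :=
  α[i % α.length]'(Nat.mod_lt _ (List.length_pos_iff.2 hα))

lemma wordPrefix_eq_take {x : ℕ → Λ} {m n : ℕ} (h : n ≤ m) :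
    wordPrefix x n = (wordPrefix x m).take n := by
  simp [wordPrefix, ← List.map_take, List.take_range, min_eq_left h]

lemma wordPrefix_periodicWord_mul_length {α : List Λ} (hα : α ≠ []) (k : ℕ) :
    wordPrefix (periodicWord α hα) (k * α.length) = wpow α k := by
  induction k with
  | zero => simp [wordPrefix, wpow]
  | succ k ih =>
    rw [Nat.succ_mul, wordPrefix, List.range_add, List.map_append, ← wordPrefix, ih, wpow_succ']
    congr 1
    refine List.ext_getElem (by simp) fun i _ hi => ?_
    simp only [List.getElem_map, List.getElem_range, periodicWord, Nat.mul_add_mod_self_right,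
      Nat.mod_eq_of_lt hi]

end PeriodicWord

namespace LabeledGraph

variable {V Λ : Type*} {G : LabeledGraph V Λ}

namespace PathLabel

lemma ne_nil {u w : V} {α : List Λ} (h : G.PathLabel u w α) : α ≠ [] := by
  cases h <;> simp

lemma exists_edge_rng {u w : V} {α : List Λ} (h : G.PathLabel u w α) : ∃ e, G.rng e = w := by
  induction h with
  | single e => exact ⟨e, rfl⟩
  | cons _ _ ih => exact ih

lemma append {u z w : V} {α γ : List Λ} (h₁ : G.PathLabel u z α) (h₂ : G.PathLabel z w γ) :
    G.PathLabel u w (α ++ γ) := by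
  induction h₁ with
  | single e => exact .cons e h₂
  | cons e _ ih => exact .cons e (ih h₂)

lemma exists_split {α γ : List Λ} (hα : α ≠ []) (hγ : γ ≠ []) {u w : V}
    (h : G.PathLabel u w (α ++ γ)) : ∃ z, G.PathLabel u z α ∧ G.PathLabel z w γ := by
  induction α generalizing u with
  | nil => exact absurd rfl hα
  | cons a α ih =>
    generalize hμ : a :: α ++ γ = μ at h
    cases h with
    | single e => simp_all
    | cons e h =>
      obtain ⟨rfl, rfl⟩ := List.cons.inj hμ
      by_cases hα' : α = []
      · subst hα'
        exact ⟨_, .single e, h⟩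
      · obtain ⟨z, h₁, h₂⟩ := ih hα' h
        exact ⟨z, .cons e h₁, h₂⟩

end PathLabel

variable (G)

lemma mem_range'_iff {y : V} {γ : List Λ} : y ∈ G.range' γ ↔ ∃ u, G.PathLabel u y γ := by
  simp [range', rel]

lemma mem_lblTo_singleton {u : V} {γ : List Λ} {k : ℕ} :
    γ ∈ G.lblTo {u} k ↔ γ.length = k ∧ u ∈ G.range' γ := by
  simp [lblTo, mem_range'_iff]

lemma rel_mono {A B : Set V} (h : A ⊆ B) (α : List Λ) : G.rel A α ⊆ G.rel B α := by
  rintro y ⟨s, hs, p⟩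
  exact ⟨s, h hs, p⟩

lemma rel_empty (α : List Λ) : G.rel ∅ α = ∅ := by
  simp [rel]

lemma rel_union (A B : Set V) (α : List Λ) : G.rel (A ∪ B) α = G.rel A α ∪ G.rel B α := by
  ext y
  simp only [rel, Set.mem_union, Set.mem_ofPred_eq, or_and_right, exists_or]

lemma rel_iUnion {ι : Sort*} (A : ι → Set V) (α : List Λ) :
    G.rel (⋃ i, A i) α = ⋃ i, G.rel (A i) α := by
  ext y
  simp only [rel, Set.mem_iUnion, Set.mem_ofPred_eq]
  grind

lemma rel_rel (A : Set V) {α γ : List Λ} (hα : α ≠ []) (hγ : γ ≠ []) :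
    G.rel (G.rel A α) γ = G.rel A (α ++ γ) := by
  ext y
  constructor
  · rintro ⟨z, ⟨s, hs, p₁⟩, p₂⟩
    exact ⟨s, hs, p₁.append p₂⟩
  · rintro ⟨s, hs, p⟩
    obtain ⟨z, p₁, p₂⟩ := p.exists_split hα hγ
    exact ⟨z, ⟨s, hs, p₁⟩, p₂⟩

lemma rel_range' {α γ : List Λ} (hα : α ≠ []) (hγ : γ ≠ []) :
    G.rel (G.range' α) γ = G.range' (α ++ γ) :=
  G.rel_rel Set.univ hα hγ

lemma rel_diff (hS : G.Standing) {A C : Set V} (hA : G.memE A) (hC : G.memE C) {α : List Λ}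
    (hα : α ≠ []) : G.rel (A \ C) α = G.rel A α \ G.rel C α := by
  have hdisj : G.rel (A \ C) α ∩ G.rel C α = ∅ := by
    rw [← hS.weakly_left_resolving _ _ (hA.diff hC) hC α hα, Set.sdiff_inter_self, rel_empty]
  have hcover : G.rel A α ⊆ G.rel (A \ C) α ∪ G.rel C α := by
    rw [← rel_union, Set.sdiff_union_self]
    exact G.rel_mono Set.subset_union_left α
  apply Set.Subset.antisymm
  · exact Set.subset_sdiff.2
      ⟨G.rel_mono Set.sdiff_subset α, Set.disjoint_iff_inter_eq_empty.2 hdisj⟩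
  · intro y ⟨hyA, hyC⟩
    exact (hcover hyA).resolve_right hyC

def PastEquiv (n : ℕ) (u u' : V) : Prop :=
  ∀ k, 1 ≤ k → k ≤ n → G.lblTo {u} k = G.lblTo {u'} k

def PastDetermined (n : ℕ) (S : Set V) : Prop :=
  ∀ u u', G.PastEquiv n u u' → (u ∈ S ↔ u' ∈ S)

def RelPastDetermined (n : ℕ) (A : Set V) : Prop :=
  G.memE A ∧ ∀ δ : List Λ, δ ≠ [] → G.PastDetermined (n + δ.length) (G.rel A δ)

variable {G}

lemma PastEquiv.mono {m n : ℕ} {u u' : V} (h : G.PastEquiv n u u') (hmn : m ≤ n) :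
    G.PastEquiv m u u' :=
  fun k hk₁ hk₂ => h k hk₁ (hk₂.trans hmn)

lemma gv_anti {v : V} {m n : ℕ} (h : m ≤ n) : G.gv v n ⊆ G.gv v m :=
  fun _ hu => ⟨hu.1, fun k hk₁ hk₂ => hu.2 k hk₁ (hk₂.trans h)⟩

lemma pastEquiv_of_mem_gv {v u u' : V} {n : ℕ} (hu : u ∈ G.gv v n) (hu' : u' ∈ G.gv v n) :
    G.PastEquiv n u u' :=
  fun k hk₁ hk₂ => (hu.2 k hk₁ hk₂).trans (hu'.2 k hk₁ hk₂).symm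

lemma pastEquiv_iff {n : ℕ} {u u' : V} :
    G.PastEquiv n u u' ↔
      ∀ γ : List Λ, γ ≠ [] → γ.length ≤ n → (u ∈ G.range' γ ↔ u' ∈ G.range' γ) := by
  constructor
  · intro h γ hγ hn
    have := h γ.length (List.length_pos_iff.2 hγ) hn
    rw [Set.ext_iff] at this
    simpa [mem_lblTo_singleton] using this γ
  · intro h k hk₁ hk₂
    ext γ
    simp only [mem_lblTo_singleton]
    constructor
    · rintro ⟨rfl, hγ⟩
      exact ⟨rfl, (h γ (List.length_pos_iff.1 hk₁) hk₂).1 hγ⟩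
    · rintro ⟨rfl, hγ⟩
      exact ⟨rfl, (h γ (List.length_pos_iff.1 hk₁) hk₂).2 hγ⟩

namespace PastDetermined

variable {n : ℕ} {S T : Set V}

lemma range' {γ : List Λ} (hγ : γ ≠ []) (hn : γ.length ≤ n) : G.PastDetermined n (G.range' γ) :=
  fun _ _ h => pastEquiv_iff.1 h γ hγ hn

lemma empty : G.PastDetermined n ∅ := by
  simp [PastDetermined]

lemma inter (hS : G.PastDetermined n S) (hT : G.PastDetermined n T) :
    G.PastDetermined n (S ∩ T) :=
  fun u u' h => and_congr (hS u u' h) (hT u u' h)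

lemma union (hS : G.PastDetermined n S) (hT : G.PastDetermined n T) :
    G.PastDetermined n (S ∪ T) :=
  fun u u' h => or_congr (hS u u' h) (hT u u' h)

lemma diff (hS : G.PastDetermined n S) (hT : G.PastDetermined n T) :
    G.PastDetermined n (S \ T) :=
  fun u u' h => and_congr (hS u u' h) (not_congr (hT u u' h))

end PastDetermined

namespace RelPastDetermined

variable {n : ℕ} {A C : Set V}

lemma range' {γ : List Λ} (hγ : γ ≠ []) (hn : γ.length ≤ n) :
    G.RelPastDetermined n (G.range' γ) := by
  refine ⟨.range γ hγ, fun δ hδ => ?_⟩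
  rw [G.rel_range' hγ hδ]
  exact .range' (by simp [hγ]) (by simpa using hn)

lemma empty : G.RelPastDetermined n ∅ :=
  ⟨.empty, fun δ _ => by simpa [rel_empty] using PastDetermined.empty⟩

lemma inter (hS : G.Standing) (hA : G.RelPastDetermined n A) (hC : G.RelPastDetermined n C) :
    G.RelPastDetermined n (A ∩ C) := by
  refine ⟨hA.1.inter hC.1, fun δ hδ => ?_⟩
  rw [hS.weakly_left_resolving A C hA.1 hC.1 δ hδ]
  exact (hA.2 δ hδ).inter (hC.2 δ hδ)

lemma union (hA : G.RelPastDetermined n A) (hC : G.RelPastDetermined n C) :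
    G.RelPastDetermined n (A ∪ C) := by
  refine ⟨hA.1.union hC.1, fun δ hδ => ?_⟩
  rw [rel_union]
  exact (hA.2 δ hδ).union (hC.2 δ hδ)

lemma diff (hS : G.Standing) (hA : G.RelPastDetermined n A) (hC : G.RelPastDetermined n C) :
    G.RelPastDetermined n (A \ C) := by
  refine ⟨hA.1.diff hC.1, fun δ hδ => ?_⟩
  rw [G.rel_diff hS hA.1 hC.1 hδ]
  exact (hA.2 δ hδ).diff (hC.2 δ hδ)

lemma inter_biInter (hS : G.Standing) {ι : Type*} {s : Set ι} (hs : s.Finite) {f : ι → Set V}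
    (hA : G.RelPastDetermined n A) (hf : ∀ i ∈ s, G.RelPastDetermined n (f i)) :
    G.RelPastDetermined n (A ∩ ⋂ i ∈ s, f i) := by
  induction s, hs using Set.Finite.induction_on with
  | empty => simpa using hA
  | @insert a s _ _ ih =>
    rw [Set.biInter_insert, Set.inter_left_comm]
    exact (hf a (Set.mem_insert a s)).inter hS (ih fun i hi => hf i (Set.mem_insert_of_mem a hi))

lemma biUnion {ι : Type*} {s : Set ι} (hs : s.Finite) {f : ι → Set V}
    (hf : ∀ i ∈ s, G.RelPastDetermined n (f i)) : G.RelPastDetermined n (⋃ i ∈ s, f i) := by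
  induction s, hs using Set.Finite.induction_on with
  | empty => simpa using empty
  | @insert a s _ _ ih =>
    rw [Set.biUnion_insert]
    exact (hf a (Set.mem_insert a s)).union (ih fun i hi => hf i (Set.mem_insert_of_mem a hi))

end RelPastDetermined

variable (G)

def lblToLE (A : Set V) (n : ℕ) : Set (List Λ) :=
  {γ | γ ≠ [] ∧ γ.length ≤ n ∧ (A ∩ G.range' γ).Nonempty}

variable {G}

lemma finite_lblToLE (hS : G.Standing) {A : Set V} (hA : G.memE A) (n : ℕ) :
    (G.lblToLE A n).Finite := by
  refine ((Set.finite_Icc 1 n).biUnion fun k hk => hS.receiver_set_finite A hA k hk.1).subset ?_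
  rintro γ ⟨hγ, hn, y, hyA, hy⟩
  obtain ⟨s, p⟩ := G.mem_range'_iff.1 hy
  exact Set.mem_biUnion ⟨List.length_pos_iff.2 hγ, hn⟩ ⟨rfl, s, y, hyA, p⟩

lemma gv_eq {v : V} {e : G.Edge} (he : G.rng e = v) {l : ℕ} (hl : 1 ≤ l) :
    G.gv v l =
      (G.range' [G.lbl e] ∩
          ⋂ γ ∈ {γ ∈ G.lblToLE (G.range' [G.lbl e]) l | v ∈ G.range' γ}, G.range' γ) \
        ⋃ γ ∈ {γ ∈ G.lblToLE (G.range' [G.lbl e]) l | v ∉ G.range' γ}, G.range' γ := by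
  set R := G.range' [G.lbl e]
  have hvR : v ∈ R := G.mem_range'_iff.2 ⟨G.src e, he ▸ .single e⟩
  ext y
  simp only [Set.mem_sdiff, Set.mem_inter_iff, Set.mem_iInter₂, Set.mem_iUnion₂, Set.mem_sep_iff,
    not_exists]
  constructor
  · rintro ⟨-, hy⟩
    have hy := pastEquiv_iff.1 hy
    refine ⟨⟨(hy _ (by simp) (by simpa)).2 hvR, fun γ hγ => (hy γ hγ.1.1 hγ.1.2.1).2 hγ.2⟩,
      fun γ hγ hyγ => hγ.2 ((hy γ hγ.1.1 hγ.1.2.1).1 hyγ)⟩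
  · rintro ⟨⟨hyR, hT⟩, hB⟩
    obtain ⟨s, p⟩ := G.mem_range'_iff.1 hyR
    refine ⟨p.exists_edge_rng, pastEquiv_iff.2 fun γ hγ hlen => ⟨fun hyγ => ?_, fun hvγ => ?_⟩⟩
    · by_contra hvγ
      exact hB γ ⟨⟨hγ, hlen, y, hyR, hyγ⟩, hvγ⟩ hyγ
    · exact hT γ ⟨⟨hγ, hlen, v, hvR, hvγ⟩, hvγ⟩

lemma relPastDetermined_gv (hS : G.Standing) {v : V} (hv : ∃ e, G.rng e = v) {l : ℕ}
    (hl : 1 ≤ l) : G.RelPastDetermined l (G.gv v l) := by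
  obtain ⟨e, he⟩ := hv
  have hR : G.RelPastDetermined l (G.range' [G.lbl e]) := .range' (by simp) (by simpa)
  have hU := finite_lblToLE hS hR.1 l
  rw [gv_eq he hl]
  exact (hR.inter_biInter hS (hU.subset (Set.sep_subset _ _))
    fun γ hγ => .range' hγ.1.1 hγ.1.2.1).diff hS
      (.biUnion (hU.subset (Set.sep_subset _ _)) fun γ hγ => .range' hγ.1.1 hγ.1.2.1)

lemma subset_rel_wpow {A : Set V} {α : List Λ} (hα : α ≠ []) (h : A ⊆ G.rel A α) {k : ℕ}
    (hk : 1 ≤ k) : A ⊆ G.rel A (wpow α k) := by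
  induction k, hk using Nat.le_induction with
  | base => simpa [wpow] using h
  | succ k hk ih =>
    have hne : wpow α k ≠ [] := by
      simpa [← List.length_pos_iff, length_wpow] using ⟨hk, List.length_pos_iff.2 hα⟩
    rw [wpow_succ', ← G.rel_rel A hne hα]
    exact h.trans (G.rel_mono ih α)

lemma exists_subset_rel_range'_wordPrefix {A : Set V} {α : List Λ} (hα : α ≠ [])
    (h : A ⊆ G.rel A α) {N : ℕ} (hN : 1 ≤ N) :
    ∃ τ : List Λ, τ ≠ [] ∧ A ⊆ G.rel (G.range' (wordPrefix (periodicWord α hα) N)) τ := by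
  have hlen : N < (N + 1) * α.length :=
    Nat.lt_of_lt_of_le N.lt_succ_self (Nat.le_mul_of_pos_right _ (List.length_pos_iff.2 hα))
  set τ := (wpow α (N + 1)).drop N
  have hprefix : wordPrefix (periodicWord α hα) N = (wpow α (N + 1)).take N := by
    rw [wordPrefix_eq_take hlen.le, wordPrefix_periodicWord_mul_length]
  have hp : (wpow α (N + 1)).take N ≠ [] :=
    List.length_pos_iff.1 (by rw [List.length_take, length_wpow]; omega)
  have hτ : τ ≠ [] := List.length_pos_iff.1 (by rw [List.length_drop, length_wpow]; omega)
  refine ⟨τ, hτ, ?_⟩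
  calc A ⊆ G.rel A (wpow α (N + 1)) := subset_rel_wpow hα h (by omega)
    _ = G.rel (G.rel A ((wpow α (N + 1)).take N)) τ := by
      rw [G.rel_rel A hp hτ, List.take_append_drop]
    _ ⊆ _ := by
      rw [hprefix]
      exact G.rel_mono (G.rel_mono (Set.subset_univ A) _) τ

lemma isLabel_wordPrefix_periodicWord {A : Set V} {α : List Λ} (hα : α ≠ [])
    (h : A ⊆ G.rel A α) (hA : A.Nonempty) {n : ℕ} (hn : 1 ≤ n) :
    G.IsLabel (wordPrefix (periodicWord α hα) n) := by
  obtain ⟨τ, -, hτ⟩ := exists_subset_rel_range'_wordPrefix hα h hn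
  obtain ⟨z, hz, -⟩ := hτ hA.some_mem
  obtain ⟨u, p⟩ := G.mem_range'_iff.1 hz
  exact ⟨u, z, p⟩

lemma StronglyCofinal.exists_gv_subset_rel (hsc : G.StronglyCofinal) (hS : G.Standing)
    {w : V} {l : ℕ → ℕ} (hmono : StrictMono l) {β : ℕ → List Λ} (hloops : ∀ i, G.IsLoop (β i) (G.gv w (l i)))
    {v : V} (hv : ∃ e, G.rng e = v) {lv : ℕ} (hlv : 1 ≤ lv) :
    ∃ (i : ℕ) (δ : List Λ), G.IsLabel δ ∧ G.gv w (l i) ⊆ G.rel (G.gv v lv) δ := by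
  obtain ⟨hβ, -, hne, hsub⟩ := hloops 0
  obtain ⟨N, hN, m, lam, hlam, hcov⟩ :=
    hsc _ (fun n => isLabel_wordPrefix_periodicWord hβ hsub hne) v lv hv hlv
  obtain ⟨τ, hτ, hA⟩ := exists_subset_rel_range'_wordPrefix hβ hsub hN
  have hlam_ne : ∀ i, lam i ≠ [] := fun i => by
    obtain ⟨_, _, p⟩ := hlam i
    exact p.ne_nil
  have hcover : G.gv w (l 0) ⊆ ⋃ i, G.rel (G.gv v lv) (lam i ++ τ) := by
    refine hA.trans ((G.rel_mono hcov τ).trans ?_)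
    rw [rel_iUnion]
    exact Set.iUnion_mono fun i => (G.rel_rel _ (hlam_ne i) hτ).le
  set M := lv + Finset.univ.sup fun i => (lam i ++ τ).length
  obtain ⟨-, -, ⟨a, ha⟩, -⟩ := hloops M
  obtain ⟨i, hai⟩ := Set.mem_iUnion.1 (hcover (gv_anti (hmono.monotone (Nat.zero_le M)) ha))
  have hδ : lam i ++ τ ≠ [] := by simp [hτ]
  refine ⟨M, lam i ++ τ, ⟨_, _, hai.choose_spec.2⟩, fun u hu => ?_⟩
  have hlen : lv + (lam i ++ τ).length ≤ l M :=
    (Nat.add_le_add_left (Finset.le_sup (f := fun i => (lam i ++ τ).length)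
      (Finset.mem_univ i)) lv).trans (hmono.id_le M)
  have hau : G.PastEquiv (lv + (lam i ++ τ).length) a u := (pastEquiv_of_mem_gv ha hu).mono hlen
  exact ((relPastDetermined_gv hS hv hlv).2 _ hδ a u hau).1 hai

lemma IsLoop.connectsToLoop_of_subset_rel {α δ : List Λ} {A B : Set V} (hloop : G.IsLoop α A)
    (hδ : G.IsLabel δ) (h : A ⊆ G.rel B δ) : G.ConnectsToLoop B :=
  ⟨α, A, hloop, 1, fun _ => δ, fun _ => hδ, fun i j hij => absurd (Subsingleton.elim i j) hij,
    h.trans (Set.subset_iUnion (fun _ : Fin 1 => G.rel B δ) 0)⟩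

end LabeledGraph

theorem stmt_9_general {V : Type*} {Λ : Type*}
    (G : LabeledGraph V Λ) (hS : G.Standing)
    (hsc : G.StronglyCofinal)
    (w : V)
    (l : ℕ → ℕ) (hmono : StrictMono l)
    (β : ℕ → List Λ) (hloops : ∀ i, G.IsLoop (β i) (G.gv w (l i))) :
    (∀ (v : V) (lv : ℕ), (∃ e : G.Edge, G.rng e = v) → 1 ≤ lv →
      ∃ (i : ℕ) (δ : List Λ), G.IsLabel δ ∧
        G.gv w (l i) ⊆ G.rel (G.gv v lv) δ) ∧
    G.EveryVertexConnectsToLoop := by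
  have hsubset := fun v lv (hv : ∃ e : G.Edge, G.rng e = v) (hlv : 1 ≤ lv) =>
    hsc.exists_gv_subset_rel hS hmono hloops hv hlv
  refine ⟨hsubset, fun v lv hlv hv => ?_⟩
  obtain ⟨i, δ, hδ, hsub⟩ := hsubset v lv hv hlv
  exact (hloops i).connectsToLoop_of_subset_rel hδ hsub

/-- Corollary 3.9 (first part): if `(E, ℒ, ℰ)` is strongly cofinal and there are a vertex
`w`, a strictly increasing sequence `l₁ < l₂ < ⋯` of positive integers and paths `βᵢ`
such that each `(βᵢ, [w]_{lᵢ})` is a loop, then every generalized vertex `[v]_l`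
satisfies `[w]_{lᵢ} ⊆ r([v]_l, δ)` for some `i` and some path `δ`; in particular, every
vertex connects to a loop. -/
theorem stmt_9 {V : Type*} {Λ : Type*} [Countable V] [Countable Λ]
    (G : LabeledGraph V Λ) [Countable G.Edge] (hS : G.Standing)
    (hsc : G.StronglyCofinal)
    (w : V) (hw : ∃ e : G.Edge, G.rng e = w)
    (l : ℕ → ℕ) (hmono : StrictMono l) (hpos : ∀ i, 1 ≤ l i)
    (β : ℕ → List Λ) (hloops : ∀ i, G.IsLoop (β i) (G.gv w (l i))) :
    (∀ (v : V) (lv : ℕ), (∃ e : G.Edge, G.rng e = v) → 1 ≤ lv →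
      ∃ (i : ℕ) (δ : List Λ), G.IsLabel δ ∧
        G.gv w (l i) ⊆ G.rel (G.gv v lv) δ) ∧
    G.EveryVertexConnectsToLoop :=
  stmt_9_general G hS hsc w l hmono β hloops
end

section
/- Let (E,ℒ) be a labeled graph satisfying the standing assumptions with ℰ the smallest normal accommodating set, and let A ∈ ℰ be minimal. Then for every β ∈ ℒ*(E) the following are equivalent: (i) A ⊆ r(A,β) (that is, (β,A) is a loop); (ii) r(A,β) ∩ A ≠ ∅; (iii) there is a path λ in E with s(λ) ∈ A, r(λ) ∈ A, and ℒ(λ) = β. -/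
namespace LabeledGraph

variable {V : Type*} {Λ : Type*} {G : LabeledGraph V Λ} {A C : Set V} {α : List Λ}

theorem PathLabel.ne_nil_s11 {u w : V} (h : G.PathLabel u w α) : α ≠ [] := by
  cases h <;> simp

theorem IsLabel.ne_nil_s11 (h : G.IsLabel α) : α ≠ [] :=
  let ⟨_, _, p⟩ := h
  p.ne_nil_s11

theorem MinimalSet.subset_of_inter_nonempty (hA : G.MinimalSet A) (hC : G.memE C)
    (h : (C ∩ A).Nonempty) : A ⊆ C := by
  rcases hA.2.2 C hC with hAC | hAC
  · exact hAC ▸ Set.inter_subset_right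
  · rw [Set.inter_comm, hAC] at h
    exact absurd h Set.not_nonempty_empty

theorem MinimalSet.subset_rel_iff_inter_nonempty (hA : G.MinimalSet A) (hα : α ≠ []) :
    A ⊆ G.rel A α ↔ (G.rel A α ∩ A).Nonempty :=
  ⟨fun h => let ⟨a, ha⟩ := hA.2.1; ⟨a, h ha, ha⟩,
    hA.subset_of_inter_nonempty (memE.relRange α hα hA.1)⟩

theorem rel_inter_nonempty_iff {B : Set V} :
    (G.rel A α ∩ B).Nonempty ↔ ∃ u ∈ A, ∃ w ∈ B, G.PathLabel u w α :=
  ⟨fun ⟨w, ⟨u, hu, p⟩, hw⟩ => ⟨u, hu, w, hw, p⟩, fun ⟨u, hu, w, hw, p⟩ => ⟨w, ⟨u, hu, p⟩, hw⟩⟩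

end LabeledGraph

theorem stmt_11_general {V : Type*} {Λ : Type*}
    (G : LabeledGraph V Λ)
    (A : Set V) (hA : G.MinimalSet A) (β : List Λ) (hβ : G.IsLabel β) :
    (A ⊆ G.rel A β ↔ (G.rel A β ∩ A).Nonempty) ∧
    (A ⊆ G.rel A β ↔ ∃ u ∈ A, ∃ w ∈ A, G.PathLabel u w β) :=
  have h := hA.subset_rel_iff_inter_nonempty hβ.ne_nil_s11
  ⟨h, h.trans LabeledGraph.rel_inter_nonempty_iff⟩

/-- For a minimal set `A ∈ ℰ` and `β ∈ ℒ*(E)`, the following are equivalent: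
(i) `A ⊆ r(A, β)` (i.e. `(β, A)` is a loop); (ii) `r(A, β) ∩ A ≠ ∅`; (iii) there is a
path `λ` with `s(λ) ∈ A`, `r(λ) ∈ A` and `ℒ(λ) = β`. -/
theorem stmt_11 {V : Type*} {Λ : Type*} [Countable V] [Countable Λ]
    (G : LabeledGraph V Λ) [Countable G.Edge] (hS : G.Standing)
    (A : Set V) (hA : G.MinimalSet A) (β : List Λ) (hβ : G.IsLabel β) :
    (A ⊆ G.rel A β ↔ (G.rel A β ∩ A).Nonempty) ∧
    (A ⊆ G.rel A β ↔ ∃ u ∈ A, ∃ w ∈ A, G.PathLabel u w β) :=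
  stmt_11_general G A hA β hβ
end
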